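/- arXiv:1701.05783 — 5 statements merged into one kernel-verified Lean document; each statement's English description precedes it below -/
import Mathlib

section
/- The function K_{a2} = p_x^2 + (k_1 x^2/2 + k_2/x^2) p_z^2 is a constant of motion for the geodesic Hamiltonian T_a, i.e. the Poisson bracket {T_a, K_{a2}} vanishes wherever x ≠ 0 and y ≠ 0. -/
/-!
The Hamiltonian separates: `T_a = (K_{a2} + L) / 2` with `L = p_y^2 + (k_1 y^2/2 + k_3/y^2) p_z^2`,
where `K_{a2}` involves only `(x, p_x, p_z)`, `L` only `(y, p_y, p_z)`, and neither involves `z`.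
So in `{T_a, K_{a2}}` every term pairing a `y`-, `z`- or `p_y`-derivative vanishes, while the
`x`- and `p_x`-derivatives of `T_a` are half those of `K_{a2}`, and the two remaining terms cancel.
-/

/-- Canonical Poisson bracket on phase space ℝ³ × ℝ³ with coordinates (x,y,z,pₓ,p_y,p_z). -/
noncomputable def pb (F G : ℝ → ℝ → ℝ → ℝ → ℝ → ℝ → ℝ) (x y z px py pz : ℝ) : ℝ :=
    deriv (fun t => F t y z px py pz) x * deriv (fun t => G x y z t py pz) px
  + deriv (fun t => F x t z px py pz) y * deriv (fun t => G x y z px t pz) py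
  + deriv (fun t => F x y t px py pz) z * deriv (fun t => G x y z px py t) pz
  - deriv (fun t => F x y z t py pz) px * deriv (fun t => G t y z px py pz) x
  - deriv (fun t => F x y z px t pz) py * deriv (fun t => G x t z px py pz) y
  - deriv (fun t => F x y z px py t) pz * deriv (fun t => G x y t px py pz) z

theorem pb_separated_eq_zero (c : ℝ) (K L : ℝ → ℝ → ℝ → ℝ) (x y z px py pz : ℝ) :
    pb (fun x y _ px py pz => c * (K x px pz + L y py pz)) (fun x _ _ px _ pz => K x px pz)
      x y z px py pz = 0 := by
  simp only [pb, deriv_const', deriv_const_mul_field', deriv_add_const', deriv_const_add']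
  ring

theorem stmt_0_general (k1 k2 k3 : ℝ) (x y z px py pz : ℝ) :
    pb (fun x y _ px py pz =>
          (1/2) * (px^2 + py^2 + ((1/2)*k1*(x^2+y^2) + k2/x^2 + k3/y^2) * pz^2))
       (fun x _ _ px _ pz => px^2 + (k1*x^2/2 + k2/x^2) * pz^2)
       x y z px py pz = 0 := by
  have hsep : (fun x y (_ : ℝ) px py pz =>
        (1/2) * (px^2 + py^2 + ((1/2)*k1*(x^2+y^2) + k2/x^2 + k3/y^2) * pz^2))
      = fun x y _ px py pz => (1/2) * ((px^2 + (k1*x^2/2 + k2/x^2) * pz^2)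
          + (py^2 + (k1*y^2/2 + k3/y^2) * pz^2)) := by
    funext x y _ px py pz
    ring
  rw [hsep]
  exact pb_separated_eq_zero (1/2) (fun x px pz => px^2 + (k1*x^2/2 + k2/x^2) * pz^2)
    (fun y py pz => py^2 + (k1*y^2/2 + k3/y^2) * pz^2) x y z px py pz

theorem stmt_0 (k1 k2 k3 : ℝ) (x y z px py pz : ℝ) (hx : x ≠ 0) (hy : y ≠ 0) :
    pb (fun x y _ px py pz =>
          (1/2) * (px^2 + py^2 + ((1/2)*k1*(x^2+y^2) + k2/x^2 + k3/y^2) * pz^2))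
       (fun x _ _ px _ pz => px^2 + (k1*x^2/2 + k2/x^2) * pz^2)
       x y z px py pz = 0 :=
  stmt_0_general k1 k2 k3 x y z px py pz
end

section
/- The two integrals K_{a2} = p_x^2 + (k_1 x^2/2 + k_2/x^2) p_z^2 and K_{a3} = p_y^2 + (k_1 y^2/2 + k_3/y^2) p_z^2 are in involution: their canonical Poisson bracket vanishes identically (for x ≠ 0, y ≠ 0). -/
theorem stmt_2 (k1 k2 k3 : ℝ) (x y z px py pz : ℝ) (hx : x ≠ 0) (hy : y ≠ 0) :
    pb (fun x _ _ px _ pz => px^2 + (k1*x^2/2 + k2/x^2) * pz^2)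
       (fun _ y _ _ py pz => py^2 + (k1*y^2/2 + k3/y^2) * pz^2)
       x y z px py pz = 0 := by
  simp [pb]
end

section
/- The functions K_{b2} = p_x^2 + (2 k_1 x^2 + k_3 x) p_z^2 and K_{b3} = p_y^2 + (k_1 y^2/2 + k_2/y^2) p_z^2 each Poisson-commute with T_b = (1/2)(p_x^2 + p_y^2 + V_b p_z^2), V_b = (1/2)k_1(4x^2+y^2) + k_2/y^2 + k_3 x, and also Poisson-commute with each other, on the set where y ≠ 0. -/
noncomputable def Tb (k1 k2 k3 : ℝ) : ℝ → ℝ → ℝ → ℝ → ℝ → ℝ → ℝ :=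
  fun x y _ px py pz =>
    (1/2) * (px^2 + py^2 + ((1/2)*k1*(4*x^2+y^2) + k2/y^2 + k3*x) * pz^2)

noncomputable def Kb2 (k1 k3 : ℝ) : ℝ → ℝ → ℝ → ℝ → ℝ → ℝ → ℝ :=
  fun x _ _ px _ pz => px^2 + (2*k1*x^2 + k3*x) * pz^2

noncomputable def Kb3 (k1 k2 : ℝ) : ℝ → ℝ → ℝ → ℝ → ℝ → ℝ → ℝ :=
  fun _ y _ _ py pz => py^2 + (k1*y^2/2 + k2/y^2) * pz^2

/-!
The potential is separable: `Tb = (Kb2 + Kb3) / 2`, where `Kb2` involves only `(x, pₓ, p_z)` and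
`Kb3` only `(y, p_y, p_z)`. Since neither depends on `z`, every term of `{Kb2, Kb3}` contains a
vanishing partial derivative; bilinearity and antisymmetry of the bracket give the rest.
-/

def SliceDifferentiableAt (F : ℝ → ℝ → ℝ → ℝ → ℝ → ℝ → ℝ) (x y z px py pz : ℝ) : Prop :=
  DifferentiableAt ℝ (fun t => F t y z px py pz) x ∧
  DifferentiableAt ℝ (fun t => F x t z px py pz) y ∧
  DifferentiableAt ℝ (fun t => F x y t px py pz) z ∧
  DifferentiableAt ℝ (fun t => F x y z t py pz) px ∧
  DifferentiableAt ℝ (fun t => F x y z px t pz) py ∧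
  DifferentiableAt ℝ (fun t => F x y z px py t) pz

section Bracket

variable (F G : ℝ → ℝ → ℝ → ℝ → ℝ → ℝ → ℝ) (x y z px py pz : ℝ)

theorem pb_self : pb F F x y z px py pz = 0 := by
  unfold pb; ring

theorem pb_swap : pb G F x y z px py pz = -pb F G x y z px py pz := by
  unfold pb; ring

theorem pb_of_separated (f g : ℝ → ℝ → ℝ → ℝ) :
    pb (fun x _ _ px _ pz => f x px pz) (fun _ y _ _ py pz => g y py pz) x y z px py pz = 0 := by
  simp [pb]

theorem deriv_linear_comb {f g : ℝ → ℝ} {t : ℝ} (a b : ℝ) (hf : DifferentiableAt ℝ f t)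
    (hg : DifferentiableAt ℝ g t) :
    deriv (fun s => a * f s + b * g s) t = a * deriv f t + b * deriv g t :=
  ((hf.hasDerivAt.const_mul a).add (hg.hasDerivAt.const_mul b)).deriv

variable {F G x y z px py pz}

theorem pb_linear_comb_left (H : ℝ → ℝ → ℝ → ℝ → ℝ → ℝ → ℝ) (a b : ℝ)
    (hF : SliceDifferentiableAt F x y z px py pz) (hG : SliceDifferentiableAt G x y z px py pz) :
    pb (fun x y z px py pz => a * F x y z px py pz + b * G x y z px py pz) H x y z px py pz =
      a * pb F H x y z px py pz + b * pb G H x y z px py pz := by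
  obtain ⟨hFx, hFy, hFz, hFpx, hFpy, hFpz⟩ := hF
  obtain ⟨hGx, hGy, hGz, hGpx, hGpy, hGpz⟩ := hG
  simp only [pb, deriv_linear_comb a b hFx hGx, deriv_linear_comb a b hFy hGy,
    deriv_linear_comb a b hFz hGz, deriv_linear_comb a b hFpx hGpx,
    deriv_linear_comb a b hFpy hGpy, deriv_linear_comb a b hFpz hGpz]
  ring

end Bracket

theorem Tb_eq_half_add (k1 k2 k3 : ℝ) :
    Tb k1 k2 k3 = fun x y z px py pz =>
      1 / 2 * Kb2 k1 k3 x y z px py pz + 1 / 2 * Kb3 k1 k2 x y z px py pz := by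
  funext x y z px py pz
  simp only [Tb, Kb2, Kb3]
  ring

theorem Kb2_sliceDifferentiableAt (k1 k3 x y z px py pz : ℝ) :
    SliceDifferentiableAt (Kb2 k1 k3) x y z px py pz := by
  refine ⟨?_, ?_, ?_, ?_, ?_, ?_⟩ <;> simp only [Kb2] <;> fun_prop

theorem Kb3_sliceDifferentiableAt (k1 k2 x y z px py pz : ℝ) (hy : y ≠ 0) :
    SliceDifferentiableAt (Kb3 k1 k2) x y z px py pz := by
  refine ⟨?_, ?_, ?_, ?_, ?_, ?_⟩ <;> simp only [Kb3] <;>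
    fun_prop (disch := exact pow_ne_zero 2 hy)

theorem stmt_7 (k1 k2 k3 : ℝ) (x y z px py pz : ℝ) (hy : y ≠ 0) :
    pb (Tb k1 k2 k3) (Kb2 k1 k3) x y z px py pz = 0 ∧
    pb (Tb k1 k2 k3) (Kb3 k1 k2) x y z px py pz = 0 ∧
    pb (Kb2 k1 k3) (Kb3 k1 k2) x y z px py pz = 0 := by
  have h23 : pb (Kb2 k1 k3) (Kb3 k1 k2) x y z px py pz = 0 :=
    pb_of_separated x y z px py pz _ _
  have h32 : pb (Kb3 k1 k2) (Kb2 k1 k3) x y z px py pz = 0 := by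
    rw [pb_swap, h23, neg_zero]
  have hd2 := Kb2_sliceDifferentiableAt k1 k3 x y z px py pz
  have hd3 := Kb3_sliceDifferentiableAt k1 k2 x y z px py pz hy
  rw [Tb_eq_half_add, pb_linear_comb_left _ _ _ hd2 hd3, pb_linear_comb_left _ _ _ hd2 hd3,
    pb_self, pb_self, h23, h32]
  norm_num
end

section
/- The function K_{c2} = (x p_y − y p_x)^2 + (k_2 (x^2+y^2)/y^2 − k_2 + k_3 x √(x^2+y^2)/y^2) p_z^2, expressed in Cartesian coordinates, Poisson-commutes with the geodesic Hamiltonian T_c = (1/2)(p_x^2 + p_y^2 + V_c p_z^2), V_c = k_1/√(x^2+y^2) + k_2/y^2 + k_3 x/(y^2 √(x^2+y^2)), on the set where y ≠ 0. -/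
set_option maxHeartbeats 1000000 in
theorem stmt_8 (k1 k2 k3 : ℝ) (x y z px py pz : ℝ) (hy : y ≠ 0) :
    pb (fun x y _ px py pz =>
          (1/2) * (px^2 + py^2 +
            (k1/Real.sqrt (x^2+y^2) + k2/y^2 + k3*x/(y^2*Real.sqrt (x^2+y^2))) * pz^2))
       (fun x y _ px py pz =>
          (x*py - y*px)^2 +
            (k2*(x^2+y^2)/y^2 - k2 + k3*x*Real.sqrt (x^2+y^2)/y^2) * pz^2)
       x y z px py pz = 0 := by
  have hxy : (0:ℝ) < x^2+y^2 := by positivity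
  simp only [pb]
  set s := Real.sqrt (x^2+y^2) with hsdef
  have hs0 : 0 < s := Real.sqrt_pos.mpr hxy
  have hsne : s ≠ 0 := ne_of_gt hs0
  have hs2 : s^2 = x^2+y^2 := Real.sq_sqrt hxy.le
  have hs3 : s^3 = (x^2+y^2)*s := by
    rw [pow_succ, hs2]
  have hy2 : y^2 = s^2 - x^2 := by rw [hs2]; ring
  have hy2ne : s^2 - x^2 ≠ 0 := by rw [← hy2]; exact pow_ne_zero 2 hy
  have hp2x : HasDerivAt (fun t : ℝ => t^2) (2*x) x := by simpa using hasDerivAt_pow 2 x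
  have hp2y : HasDerivAt (fun t : ℝ => t^2) (2*y) y := by simpa using hasDerivAt_pow 2 y
  have hp2px : HasDerivAt (fun t : ℝ => t^2) (2*px) px := by simpa using hasDerivAt_pow 2 px
  have hp2py : HasDerivAt (fun t : ℝ => t^2) (2*py) py := by simpa using hasDerivAt_pow 2 py
  have hsx : HasDerivAt (fun t => Real.sqrt (t^2+y^2)) (x/s) x := by
    have h1 : HasDerivAt (fun t : ℝ => t^2+y^2) (2*x) x := hp2x.add_const (y^2)
    have h2 := (Real.hasDerivAt_sqrt hxy.ne').comp x h1
    refine h2.congr_deriv (Eq.symm ?_)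
    rw [← hsdef]
    field_simp
  have hsy : HasDerivAt (fun t => Real.sqrt (x^2+t^2)) (y/s) y := by
    have h1 : HasDerivAt (fun t : ℝ => x^2+t^2) (2*y) y := hp2y.const_add (x^2)
    have h2 := (Real.hasDerivAt_sqrt hxy.ne').comp y h1
    refine h2.congr_deriv (Eq.symm ?_)
    rw [← hsdef]
    field_simp
  have hy2s : y^2*s ≠ 0 := mul_ne_zero (pow_ne_zero 2 hy) hsne
  -- derivative of T in x
  have hTx : HasDerivAt (fun t => (1/2) * (px^2 + py^2 +
      (k1/Real.sqrt (t^2+y^2) + k2/y^2 + k3*t/(y^2*Real.sqrt (t^2+y^2))) * pz^2))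
      (pz^2*(k3-k1*x)/(2*s^3)) x := by
    have hA : HasDerivAt (fun t => k1/Real.sqrt (t^2+y^2)) ((0*s - k1*(x/s))/s^2) x :=
      (hasDerivAt_const x k1).div hsx hsne
    have hB : HasDerivAt (fun t => k3*t/(y^2*Real.sqrt (t^2+y^2)))
        ((k3*1*(y^2*s) - k3*x*(y^2*(x/s)))/(y^2*s)^2) x :=
      ((hasDerivAt_id x).const_mul k3).div (hsx.const_mul (y^2)) hy2s
    have hC := (((hA.add (hasDerivAt_const x (k2/y^2))).add hB).mul_const (pz^2)).const_add
        (px^2 + py^2)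
    have hD := hC.const_mul (1/2 : ℝ)
    refine hD.congr_deriv (Eq.symm ?_)
    rw [hy2]
    field_simp
    ring
  -- derivative of T in y
  have hTy : HasDerivAt (fun t => (1/2) * (px^2 + py^2 +
      (k1/Real.sqrt (x^2+t^2) + k2/t^2 + k3*x/(t^2*Real.sqrt (x^2+t^2))) * pz^2))
      (pz^2/2*(-(k1*y)/s^3 - 2*k2/y^3 - k3*x*(2*s^2+y^2)/(y^3*s^3))) y := by
    have hA : HasDerivAt (fun t => k1/Real.sqrt (x^2+t^2)) ((0*s - k1*(y/s))/s^2) y :=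
      (hasDerivAt_const y k1).div hsy hsne
    have hB : HasDerivAt (fun t : ℝ => k2/t^2) ((0*y^2 - k2*(2*y))/(y^2)^2) y :=
      (hasDerivAt_const y k2).div hp2y (pow_ne_zero 2 hy)
    have hC : HasDerivAt (fun t => k3*x/(t^2*Real.sqrt (x^2+t^2)))
        ((0*(y^2*s) - k3*x*(2*y*s + y^2*(y/s)))/(y^2*s)^2) y :=
      (hasDerivAt_const y (k3*x)).div (hp2y.mul hsy) hy2s
    have hD := ((((hA.add hB).add hC).mul_const (pz^2)).const_add (px^2 + py^2)).const_mul
        (1/2 : ℝ)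
    refine hD.congr_deriv (Eq.symm ?_)
    field_simp
    ring
  -- derivative of T in px
  have hTpx : HasDerivAt (fun t => (1/2) * (t^2 + py^2 +
      (k1/s + k2/y^2 + k3*x/(y^2*s)) * pz^2)) px px := by
    have h := ((hp2px.add_const (py^2)).add_const
        ((k1/s + k2/y^2 + k3*x/(y^2*s)) * pz^2)).const_mul (1/2 : ℝ)
    refine h.congr_deriv (Eq.symm ?_)
    ring
  -- derivative of T in py
  have hTpy : HasDerivAt (fun t => (1/2) * (px^2 + t^2 +
      (k1/s + k2/y^2 + k3*x/(y^2*s)) * pz^2)) py py := by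
    have h := ((hp2py.const_add (px^2)).add_const
        ((k1/s + k2/y^2 + k3*x/(y^2*s)) * pz^2)).const_mul (1/2 : ℝ)
    refine h.congr_deriv (Eq.symm ?_)
    ring
  -- derivative of K in x
  have hKx : HasDerivAt (fun t => (t*py - y*px)^2 +
      (k2*(t^2+y^2)/y^2 - k2 + k3*t*Real.sqrt (t^2+y^2)/y^2) * pz^2)
      (2*py*(x*py-y*px) + (2*k2*x/y^2 + k3*(s^2+x^2)/(s*y^2))*pz^2) x := by
    have h1 : HasDerivAt (fun t => (t*py - y*px)^2) (2*(x*py-y*px)*py) x := by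
      have hb : HasDerivAt (fun t => t*py - y*px) (1*py) x :=
        ((hasDerivAt_id x).mul_const py).sub_const (y*px)
      exact (hb.pow 2).congr_deriv (by norm_num [pow_one])
    have h2 : HasDerivAt (fun t => k2*(t^2+y^2)/y^2) (k2*(2*x)/y^2) x :=
      ((hp2x.add_const (y^2)).const_mul k2).div_const (y^2)
    have h3 : HasDerivAt (fun t => k3*t*Real.sqrt (t^2+y^2)/y^2)
        ((k3*1*s + k3*x*(x/s))/y^2) x :=
      (((hasDerivAt_id x).const_mul k3).mul hsx).div_const (y^2)
    have h := h1.add (((h2.sub_const k2).add h3).mul_const (pz^2))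
    refine h.congr_deriv (Eq.symm ?_)
    field_simp
  -- derivative of K in y
  have hKy : HasDerivAt (fun t => (x*py - t*px)^2 +
      (k2*(x^2+t^2)/t^2 - k2 + k3*x*Real.sqrt (x^2+t^2)/t^2) * pz^2)
      (-(2*px*(x*py-y*px)) + (-(2*k2*x^2)/y^3 + k3*x*(y^2-2*s^2)/(s*y^3))*pz^2) y := by
    have h1 : HasDerivAt (fun t => (x*py - t*px)^2) (-(2*(x*py-y*px)*px)) y := by
      have hb : HasDerivAt (fun t => x*py - t*px) (-(1*px)) y :=
        ((hasDerivAt_id y).mul_const px).const_sub (x*py)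
      exact (hb.pow 2).congr_deriv (by norm_num [pow_one])
    have h2 : HasDerivAt (fun t => k2*(x^2+t^2)/t^2)
        ((k2*(2*y)*y^2 - k2*(x^2+y^2)*(2*y))/(y^2)^2) y :=
      ((hp2y.const_add (x^2)).const_mul k2).div hp2y (pow_ne_zero 2 hy)
    have h3 : HasDerivAt (fun t => k3*x*Real.sqrt (x^2+t^2)/t^2)
        ((k3*x*(y/s)*y^2 - k3*x*s*(2*y))/(y^2)^2) y := by
      have hn : HasDerivAt (fun t => k3*x*Real.sqrt (x^2+t^2)) (k3*x*(y/s)) y :=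
        hsy.const_mul (k3*x)
      exact hn.div hp2y (pow_ne_zero 2 hy)
    have h := h1.add (((h2.sub_const k2).add h3).mul_const (pz^2))
    refine h.congr_deriv (Eq.symm ?_)
    field_simp
    ring
  -- derivative of K in px
  have hKpx : HasDerivAt (fun t => (x*py - y*t)^2 +
      (k2*(x^2+y^2)/y^2 - k2 + k3*x*s/y^2) * pz^2) (-(2*y*(x*py-y*px))) px := by
    have hb : HasDerivAt (fun t => x*py - y*t) (-(y*1)) px :=
      ((hasDerivAt_id px).const_mul y).const_sub (x*py)
    have h := (hb.pow 2).add_const ((k2*(x^2+y^2)/y^2 - k2 + k3*x*s/y^2) * pz^2)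
    refine h.congr_deriv (Eq.symm ?_)
    push_cast
    ring
  -- derivative of K in py
  have hKpy : HasDerivAt (fun t => (x*t - y*px)^2 +
      (k2*(x^2+y^2)/y^2 - k2 + k3*x*s/y^2) * pz^2) (2*x*(x*py-y*px)) py := by
    have hb : HasDerivAt (fun t => x*t - y*px) (x*1) py :=
      ((hasDerivAt_id py).const_mul x).sub_const (y*px)
    have h := (hb.pow 2).add_const ((k2*(x^2+y^2)/y^2 - k2 + k3*x*s/y^2) * pz^2)
    refine h.congr_deriv (Eq.symm ?_)
    push_cast
    ring
  rw [hTx.deriv, hTy.deriv, hTpx.deriv, hTpy.deriv, hKx.deriv, hKy.deriv, hKpx.deriv,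
    hKpy.deriv, deriv_const, deriv_const, zero_mul, mul_zero, hs3, hs2]
  field_simp
  ring
end

section
/- For the deformed Kepler–Coulomb geodesic Hamiltonian T̃_c = T_c/(1 − λ/r), r = √(x^2+y^2), the angular-type integral K̃_{c2} (which in polar coordinates reads p_φ^2 + (k_2/sin^2 φ + k_3 cos φ/sin^2 φ) p_z^2 and is independent of λ) Poisson-commutes with T̃_c on the open set where y ≠ 0 and r ≠ λ. -/
theorem pb_eq_of_hasDerivAt {F G : ℝ → ℝ → ℝ → ℝ → ℝ → ℝ → ℝ}
    {x y z px py pz Fx Fy Fz Fpx Fpy Fpz Gx Gy Gz Gpx Gpy Gpz : ℝ}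
    (hFx : HasDerivAt (fun t => F t y z px py pz) Fx x)
    (hFy : HasDerivAt (fun t => F x t z px py pz) Fy y)
    (hFz : HasDerivAt (fun t => F x y t px py pz) Fz z)
    (hFpx : HasDerivAt (fun t => F x y z t py pz) Fpx px)
    (hFpy : HasDerivAt (fun t => F x y z px t pz) Fpy py)
    (hFpz : HasDerivAt (fun t => F x y z px py t) Fpz pz)
    (hGx : HasDerivAt (fun t => G t y z px py pz) Gx x)
    (hGy : HasDerivAt (fun t => G x t z px py pz) Gy y)
    (hGz : HasDerivAt (fun t => G x y t px py pz) Gz z)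
    (hGpx : HasDerivAt (fun t => G x y z t py pz) Gpx px)
    (hGpy : HasDerivAt (fun t => G x y z px t pz) Gpy py)
    (hGpz : HasDerivAt (fun t => G x y z px py t) Gpz pz) :
    pb F G x y z px py pz =
      Fx * Gpx + Fy * Gpy + Fz * Gpz - Fpx * Gx - Fpy * Gy - Fpz * Gz := by
  rw [pb, hFx.deriv, hFy.deriv, hFz.deriv, hFpx.deriv, hFpy.deriv, hFpz.deriv,
    hGx.deriv, hGy.deriv, hGz.deriv, hGpx.deriv, hGpy.deriv, hGpz.deriv]

noncomputable def scaledHamiltonian (V D : ℝ → ℝ → ℝ) : ℝ → ℝ → ℝ → ℝ → ℝ → ℝ → ℝ :=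
  fun x y _ px py pz => (1/2 * (px^2 + py^2 + V x y * pz^2)) / D x y

def angularIntegral (W : ℝ → ℝ → ℝ) : ℝ → ℝ → ℝ → ℝ → ℝ → ℝ → ℝ :=
  fun x y _ px py pz => (x * py - y * px)^2 + W x y * pz^2

theorem pb_scaledHamiltonian_angularIntegral_eq_zero {V W D : ℝ → ℝ → ℝ}
    {x y z px py pz Vx Vy L Dx Dy : ℝ}
    (hVx : HasDerivAt (fun t => V t y) Vx x) (hVy : HasDerivAt (V x) Vy y)
    (hL : x * Vy - y * Vx = L)
    (hWx : HasDerivAt (fun t => W t y) (-(y * L)) x) (hWy : HasDerivAt (W x) (x * L) y)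
    (hDx : HasDerivAt (fun t => D t y) Dx x) (hDy : HasDerivAt (D x) Dy y)
    (hD : D x y ≠ 0) (hD_radial : x * Dy = y * Dx) :
    pb (scaledHamiltonian V D) (angularIntegral W) x y z px py pz = 0 := by
  rw [pb_eq_of_hasDerivAt (F := scaledHamiltonian V D) (G := angularIntegral W)
    ((((hVx.mul_const (pz^2)).const_add (px^2 + py^2)).const_mul (1/2)).div hDx hD)
    ((((hVy.mul_const (pz^2)).const_add (px^2 + py^2)).const_mul (1/2)).div hDy hD)
    (hasDerivAt_const z _)
    (((((hasDerivAt_pow 2 px).add_const (py^2)).add_const (V x y * pz^2)).const_mul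
      (1/2)).div_const (D x y))
    (((((hasDerivAt_pow 2 py).const_add (px^2)).add_const (V x y * pz^2)).const_mul
      (1/2)).div_const (D x y))
    (((((hasDerivAt_pow 2 pz).const_mul (V x y)).const_add (px^2 + py^2)).const_mul
      (1/2)).div_const (D x y))
    (((((hasDerivAt_id' x).mul_const py).sub_const (y * px)).pow 2).add (hWx.mul_const (pz^2)))
    (((((hasDerivAt_id' y).mul_const px).const_sub (x * py)).pow 2).add (hWy.mul_const (pz^2)))
    (hasDerivAt_const z _)
    (((((hasDerivAt_id' px).const_mul y).const_sub (x * py)).pow 2).add_const (W x y * pz^2))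
    (((((hasDerivAt_id' py).const_mul x).sub_const (y * px)).pow 2).add_const (W x y * pz^2))
    (((hasDerivAt_pow 2 pz).const_mul (W x y)).const_add ((x * py - y * px)^2))]
  subst hL
  field_simp
  linear_combination -2 * (px^2 + py^2 + V x y * pz^2) * (x * py - y * px) * hD_radial

noncomputable def radius (x y : ℝ) : ℝ := √(x^2 + y^2)

noncomputable def deformationFactor (lam x y : ℝ) : ℝ := 1 - lam / radius x y

noncomputable def kcPotential (k1 k2 k3 x y : ℝ) : ℝ :=
  k1 / radius x y + k2 / y^2 + k3 * x / (y^2 * radius x y)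

noncomputable def angularWeight (k2 k3 x y : ℝ) : ℝ := (k2 * x^2 + k3 * x * radius x y) / y^2

noncomputable def kcPotentialAngularDeriv (k2 k3 x y : ℝ) : ℝ :=
  -(2 * k2 * x / y^3 + k3 * (2 * x^2 + y^2) / (y^3 * radius x y))

section

variable {x y : ℝ}

theorem radius_pos (h : y ≠ 0) : 0 < radius x y := Real.sqrt_pos.2 (by positivity)

theorem radius_sq (x y : ℝ) : radius x y ^ 2 = x^2 + y^2 := Real.sq_sqrt (by positivity)

theorem hasDerivAt_radius_fst (h : y ≠ 0) :
    HasDerivAt (fun t => radius t y) (x / radius x y) x := by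
  refine (((hasDerivAt_pow 2 x).add_const (y^2)).sqrt (by positivity)).congr_deriv ?_
  simp only [radius]
  field_simp
  norm_num

theorem hasDerivAt_radius_snd (h : y ≠ 0) :
    HasDerivAt (radius x) (y / radius x y) y := by
  refine (((hasDerivAt_pow 2 y).const_add (x^2)).sqrt (by positivity)).congr_deriv ?_
  simp only [radius]
  field_simp
  norm_num

theorem deformationFactor_ne_zero {lam : ℝ} (h : y ≠ 0) (hlam : radius x y ≠ lam) :
    deformationFactor lam x y ≠ 0 := by
  rw [deformationFactor, sub_ne_zero, ne_comm, Ne, div_eq_one_iff_eq (radius_pos h).ne']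
  exact fun h' => hlam h'.symm

theorem hasDerivAt_deformationFactor_fst (lam : ℝ) (h : y ≠ 0) :
    HasDerivAt (fun t => deformationFactor lam t y) (lam * x / radius x y ^ 3) x := by
  have hr := (radius_pos (x := x) h).ne'
  refine (((hasDerivAt_const x lam).div (hasDerivAt_radius_fst h) hr).const_sub 1).congr_deriv ?_
  field_simp
  ring

theorem hasDerivAt_deformationFactor_snd (lam : ℝ) (h : y ≠ 0) :
    HasDerivAt (deformationFactor lam x) (lam * y / radius x y ^ 3) y := by
  have hr := (radius_pos (x := x) h).ne'
  refine (((hasDerivAt_const y lam).div (hasDerivAt_radius_snd h) hr).const_sub 1).congr_deriv ?_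
  field_simp
  ring

theorem hasDerivAt_kcPotential_fst (k1 k2 k3 : ℝ) (h : y ≠ 0) :
    HasDerivAt (fun t => kcPotential k1 k2 k3 t y) ((k3 - k1 * x) / radius x y ^ 3) x := by
  have hr := (radius_pos (x := x) h).ne'
  have hrx := hasDerivAt_radius_fst (x := x) h
  refine ((((hasDerivAt_const x k1).div hrx hr).add_const (k2 / y^2)).add
    (((hasDerivAt_id' x).const_mul k3).div (hrx.const_mul (y^2)) (by positivity))).congr_deriv ?_
  field_simp
  linear_combination k3 * radius_sq x y

theorem hasDerivAt_kcPotential_snd (k1 k2 k3 : ℝ) (h : y ≠ 0) :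
    HasDerivAt (kcPotential k1 k2 k3 x)
      (-(k1 * y / radius x y ^ 3) - 2 * k2 / y^3
        - k3 * x * (2 * x^2 + 3 * y^2) / (y^3 * radius x y ^ 3)) y := by
  have hr := (radius_pos (x := x) h).ne'
  have hry := hasDerivAt_radius_snd (x := x) h
  refine ((((hasDerivAt_const y k1).div hry hr).add
    ((hasDerivAt_const y k2).div (hasDerivAt_pow 2 y) (by positivity))).add
    ((hasDerivAt_const y (k3 * x)).div ((hasDerivAt_pow 2 y).mul hry)
      (mul_ne_zero (pow_ne_zero 2 h) hr))).congr_deriv ?_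
  simp only [Pi.mul_apply]
  field_simp
  linear_combination -2 * x * y * k3 * radius_sq x y

theorem kcPotential_angularDeriv (k1 k2 k3 : ℝ) (h : y ≠ 0) :
    x * (-(k1 * y / radius x y ^ 3) - 2 * k2 / y^3
        - k3 * x * (2 * x^2 + 3 * y^2) / (y^3 * radius x y ^ 3))
      - y * ((k3 - k1 * x) / radius x y ^ 3) = kcPotentialAngularDeriv k2 k3 x y := by
  have hr := (radius_pos (x := x) h).ne'
  simp only [kcPotentialAngularDeriv]
  field_simp
  linear_combination k3 * (2 * x^2 + y^2) * radius_sq x y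

theorem hasDerivAt_angularWeight_fst (k2 k3 : ℝ) (h : y ≠ 0) :
    HasDerivAt (fun t => angularWeight k2 k3 t y)
      (-(y * kcPotentialAngularDeriv k2 k3 x y)) x := by
  have hr := (radius_pos (x := x) h).ne'
  have hrx := hasDerivAt_radius_fst (x := x) h
  refine ((((hasDerivAt_pow 2 x).const_mul k2).add
    (((hasDerivAt_id' x).const_mul k3).mul hrx)).div_const (y^2)).congr_deriv ?_
  simp only [kcPotentialAngularDeriv]
  field_simp
  linear_combination k3 * radius_sq x y

theorem hasDerivAt_angularWeight_snd (k2 k3 : ℝ) (h : y ≠ 0) :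
    HasDerivAt (angularWeight k2 k3 x) (x * kcPotentialAngularDeriv k2 k3 x y) y := by
  have hr := (radius_pos (x := x) h).ne'
  have hry := hasDerivAt_radius_snd (x := x) h
  refine (((hry.const_mul (k3 * x)).const_add (k2 * x^2)).div (hasDerivAt_pow 2 y)
    (by positivity)).congr_deriv ?_
  simp only [kcPotentialAngularDeriv]
  field_simp
  linear_combination -2 * x * y * k3 * radius_sq x y

end

theorem stmt_12 (lam k1 k2 k3 : ℝ) (x y z px py pz : ℝ)
    (hy : y ≠ 0) (hr : Real.sqrt (x^2+y^2) ≠ lam) :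
    pb (fun x y _ px py pz =>
          ((1/2) * (px^2 + py^2 +
              (k1/Real.sqrt (x^2+y^2) + k2/y^2
                + k3*x/(y^2*Real.sqrt (x^2+y^2))) * pz^2))
            / (1 - lam/Real.sqrt (x^2+y^2)))
       (fun x y _ px py pz =>
          (x*py - y*px)^2 +
            ((k2*x^2 + k3*x*Real.sqrt (x^2+y^2))/y^2) * pz^2)
       x y z px py pz = 0 :=
  pb_scaledHamiltonian_angularIntegral_eq_zero
    (V := kcPotential k1 k2 k3) (W := angularWeight k2 k3) (D := deformationFactor lam)
    (hasDerivAt_kcPotential_fst k1 k2 k3 hy) (hasDerivAt_kcPotential_snd k1 k2 k3 hy)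
    (kcPotential_angularDeriv k1 k2 k3 hy)
    (hasDerivAt_angularWeight_fst k2 k3 hy) (hasDerivAt_angularWeight_snd k2 k3 hy)
    (hasDerivAt_deformationFactor_fst lam hy) (hasDerivAt_deformationFactor_snd lam hy)
    (deformationFactor_ne_zero hy hr) (by ring)
end
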